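/- For a connected, symmetric, reflexive, locatable digraph D of order n, γ_OL(D) = n if and only if n = 1. -/

import Mathlib

open scoped symmDiff

/-- The open in-neighbourhood of `v` in the digraph `D` (loops allowed). -/
def Nin {V : Type*} (D : V → V → Prop) (v : V) : Set V := {u | D u v}

/-- A digraph is locatable if every vertex has positive in-degree and
open in-neighbourhoods are pairwise distinct. -/
def Locatable {V : Type*} (D : V → V → Prop) : Prop :=
  (∀ v, (Nin D v).Nonempty) ∧ ∀ x y, Nin D x = Nin D y → x = y

/-- `S` is an open neighbourhood locating-dominating set of `D`. -/
def IsOLD {V : Type*} (D : V → V → Prop) (S : Set V) : Prop :=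
  (∀ v, ∃ u ∈ S, D u v) ∧ ∀ x y, x ≠ y → ∃ s ∈ S, s ∈ Nin D x ∆ Nin D y

/-- The OLD number `γ_OL(D)`: minimum size of an OLD set. -/
noncomputable def oldNum {V : Type*} (D : V → V → Prop) : ℕ :=
  sInf {k | ∃ S : Set V, IsOLD D S ∧ S.ncard = k}

/-- `v` is domination-forced: it is the unique in-neighbour of some vertex. -/
def DomForced {V : Type*} (D : V → V → Prop) (v : V) : Prop := ∃ w, Nin D w = {v}

/-- `v` is location-forced: some pair of distinct vertices has
in-neighbourhood symmetric difference `{v}`. -/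
def LocForced {V : Type*} (D : V → V → Prop) (v : V) : Prop :=
  ∃ x y, x ≠ y ∧ Nin D x ∆ Nin D y = {v}

/-- The arc `xy` is a forcing arc. -/
def ForcingArc {V : Type*} (D : V → V → Prop) (x y : V) : Prop :=
  Nin D y = {x} ∨ ∃ z, Nin D y ∆ Nin D z = {x} ∧ x ∈ Nin D y

/-- The underlying simple undirected graph of a digraph. -/
def underlying {V : Type*} (D : V → V → Prop) : SimpleGraph V where
  Adj x y := x ≠ y ∧ (D x y ∨ D y x)
  symm := by constructor; intro x y h; exact ⟨h.1.symm, h.2.symm⟩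
  loopless := by constructor; intro x h; exact h.1 rfl


/-!
If every vertex `v` were location-forced, witnessed by `x v ≠ y v` with
`N(x v) ∆ N(y v) = {v}`, then over `GF(2)` the in-neighbourhood matrix `A` would satisfy
`A * B = 1`, where column `v` of `B` is `e_{x v} + e_{y v}`. But every column of `B` has even
weight, so the all-ones row vector is killed by the invertible matrix `B`. Hence some vertex `v`
is not location-forced, and then `V \ {v}` is still an OLD set: loops dominate every other
vertex, and a neighbour of `v` (which exists by connectivity once `n ≥ 2`) dominates `v`.
-/

open Matrix

section GF2

variable {V : Type*} [Fintype V] [DecidableEq V]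

def pairMatrix (x y : V → V) : Matrix V V (ZMod 2) :=
  Matrix.of fun u v => (Pi.single (x v) 1 + Pi.single (y v) 1 : V → ZMod 2) u

lemma mul_pairMatrix_apply (A : Matrix V V (ZMod 2)) (x y : V → V) (w v : V) :
    (A * pairMatrix x y) w v = A w (x v) + A w (y v) := by
  simp [pairMatrix, Matrix.mul_apply, mul_add, Finset.sum_add_distrib, Pi.single_apply]

lemma vecMul_pairMatrix_one (x y : V → V) : (fun _ => 1) ᵥ* pairMatrix x y = 0 := by
  ext v
  simp [pairMatrix, Matrix.vecMul, dotProduct, Finset.sum_add_distrib, CharTwo.add_self_eq_zero]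

theorem not_forall_add_col_eq_single [Nonempty V] (A : Matrix V V (ZMod 2)) (x y : V → V) :
    ¬ ∀ w v, A w (x v) + A w (y v) = (1 : Matrix V V (ZMod 2)) w v := by
  intro h
  have hAB : A * pairMatrix x y = 1 := by
    ext w v
    rw [mul_pairMatrix_apply, h]
  have hones : (fun _ => (1 : ZMod 2)) ᵥ* pairMatrix x y ᵥ* A = fun _ => 1 := by
    rw [Matrix.vecMul_vecMul, mul_eq_one_comm.mp hAB, Matrix.vecMul_one]
  rw [vecMul_pairMatrix_one, Matrix.zero_vecMul] at hones
  exact zero_ne_one (congrFun hones (Classical.arbitrary V))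

end GF2

lemma Set.indicator_one_add_indicator_one {α R : Type*} [Ring R] [CharP R 2] (s t : Set α)
    (a : α) : s.indicator (1 : α → R) a + t.indicator 1 a = (s ∆ t).indicator 1 a := by
  by_cases hs : a ∈ s <;> by_cases ht : a ∈ t <;>
    simp [Set.mem_symmDiff, hs, ht, CharTwo.add_self_eq_zero]

section Digraph

variable {V : Type*} {D : V → V → Prop}

theorem exists_not_locForced [Fintype V] [Nonempty V] (D : V → V → Prop) :
    ∃ v, ¬ LocForced D v := by
  classical
  by_contra! hforced
  choose x y _ hxy using hforced
  refine not_forall_add_col_eq_single (Matrix.of fun w u => (Nin D u).indicator 1 w) x y ?_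
  intro w v
  simp only [Matrix.of_apply, Set.indicator_one_add_indicator_one, hxy v, Matrix.one_apply]
  simp [Set.indicator_apply]

lemma Locatable.isOLD_univ (hloc : Locatable D) : IsOLD D Set.univ := by
  refine ⟨fun v => ?_, fun x y hxy => ?_⟩
  · obtain ⟨u, hu⟩ := hloc.1 v
    exact ⟨u, Set.mem_univ u, hu⟩
  · obtain ⟨s, hs⟩ := Set.nonempty_iff_ne_empty.mpr
      (mt symmDiff_eq_bot.mp (mt (hloc.2 x y) hxy))
    exact ⟨s, Set.mem_univ s, hs⟩

lemma IsOLD.nonempty [Nonempty V] {S : Set V} (hS : IsOLD D S) : S.Nonempty := by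
  obtain ⟨u, hu, -⟩ := hS.1 (Classical.arbitrary V)
  exact ⟨u, hu⟩

lemma isOLD_compl_singleton (hrefl : ∀ v, D v v) (hinj : ∀ x y, Nin D x = Nin D y → x = y)
    {v : V} (hv : ¬ LocForced D v) (hdom : ∃ u ≠ v, D u v) : IsOLD D {v}ᶜ := by
  refine ⟨fun w => ?_, fun a b hab => ?_⟩
  · by_cases hwv : w = v
    · subst hwv
      exact hdom
    · exact ⟨w, hwv, hrefl w⟩
  · by_contra! hno
    apply hv
    refine ⟨a, b, hab, Set.eq_singleton_iff_nonempty_unique_mem.mpr ⟨?_, fun s hs => ?_⟩⟩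
    · exact Set.nonempty_iff_ne_empty.mpr (mt symmDiff_eq_bot.mp (mt (hinj a b) hab))
    · by_contra hsv
      exact hno s hsv hs

lemma exists_ne_adj_of_connected [Nontrivial V] (hconn : (underlying D).Connected)
    (hsym : ∀ x y, D x y → D y x) (v : V) : ∃ u ≠ v, D u v := by
  obtain ⟨u, hne, hD⟩ := hconn.preconnected.exists_adj_of_nontrivial v
  exact ⟨u, hne.symm, hD.elim (hsym v u) id⟩

lemma oldNum_le_ncard {S : Set V} (hS : IsOLD D S) : oldNum D ≤ S.ncard :=
  Nat.sInf_le ⟨S, hS, rfl⟩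

lemma oldNum_pos [Finite V] [Nonempty V] {S : Set V} (hS : IsOLD D S) : 0 < oldNum D := by
  have hne : {k | ∃ T : Set V, IsOLD D T ∧ T.ncard = k}.Nonempty := ⟨S.ncard, S, hS, rfl⟩
  obtain ⟨T, hT, hcard⟩ := Nat.sInf_mem hne
  rw [oldNum, ← hcard]
  exact hT.nonempty.ncard_pos

lemma oldNum_lt_card [Fintype V] [Nontrivial V] (hconn : (underlying D).Connected)
    (hsym : ∀ x y, D x y → D y x) (hrefl : ∀ v, D v v)
    (hinj : ∀ x y, Nin D x = Nin D y → x = y) : oldNum D < Fintype.card V := by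
  obtain ⟨v, hv⟩ := exists_not_locForced D
  have hle := oldNum_le_ncard
    (isOLD_compl_singleton hrefl hinj hv (exists_ne_adj_of_connected hconn hsym v))
  rw [Set.ncard_compl, Set.ncard_singleton, Nat.card_eq_fintype_card] at hle
  have := Fintype.card_pos (α := V)
  omega

end Digraph

theorem stmt_9 {V : Type*} [Fintype V] (D : V → V → Prop)
    (hconn : (underlying D).Connected)
    (hsym : ∀ x y, D x y → D y x) (hrefl : ∀ v, D v v) (hloc : Locatable D) :
    oldNum D = Fintype.card V ↔ Fintype.card V = 1 := by
  have : Nonempty V := hconn.nonempty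
  have hpos : 0 < oldNum D := oldNum_pos hloc.isOLD_univ
  have hle : oldNum D ≤ Fintype.card V := by
    simpa [Set.ncard_univ] using oldNum_le_ncard hloc.isOLD_univ
  constructor
  · intro hnum
    by_contra hcard
    have : Nontrivial V := Fintype.one_lt_card_iff_nontrivial.mp (by omega)
    exact (oldNum_lt_card hconn hsym hrefl hloc.2).ne hnum
  · intro hcard
    omega
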